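/- Negligibility of the mean-difference component of the test statistic under the null hypothesis: Let (𝒢, d) be a finite metric space, let X₁, X₂, … be i.i.d. 𝒢-valued random variables with distribution P having unique Fréchet mean μ and σ² = E[d⁴(X₁,μ)] − V² > 0. Fix t ∈ (0,1) and for each N set n = ⌊Nt⌋; let μ̂ₙ and μ̂_{N−n} be measurable choices of empirical Fréchet means of X₁,…,Xₙ and of Xₙ₊₁,…,X_N respectively, and define V̂ₙ, V̂_{N−n}, V̂ₙᶜ = (1/n)Σᵢ₌₁ⁿ d²(Xᵢ, μ̂_{N−n}), and V̂_{N−n}ᶜ = (1/(N−n))Σᵢ₌ₙ₊₁^N d²(Xᵢ, μ̂ₙ). Then N · (t(1−t)/σ²) · (V̂ₙᶜ − V̂ₙ + V̂_{N−n}ᶜ − V̂_{N−n})² converges to 0 in probability as N → ∞. -/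

import Mathlib

open MeasureTheory ProbabilityTheory Filter Topology

/-- The split point `n = ⌊N t⌋`. -/
noncomputable def splitPt (t : ℝ) (N : ℕ) : ℕ := ⌊(N : ℝ) * t⌋₊

/-- The empirical Fréchet functional of the observations `X_a, …, X_{b-1}`
evaluated at the candidate point `c`:  `(1/(b-a)) Σ_{a ≤ i < b} d²(Xᵢ, c)`. -/
noncomputable def empF {G Ω : Type*} [MetricSpace G]
    (X : ℕ → Ω → G) (a b : ℕ) (ω : Ω) (c : G) : ℝ :=
  ((b - a : ℕ) : ℝ)⁻¹ * ∑ i ∈ Finset.Ico a b, dist (X i ω) c ^ 2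

/-! Because `G` is finite and `μ` is the unique Fréchet mean, the population functional
`c ↦ E d²(X, c)` exceeds its minimum by a fixed gap at every `c ≠ μ`. The strong law, applied to
the finitely many variables `d²(Xᵢ, c)`, makes the empirical functionals of both blocks converge
almost surely at every `c`, so both empirical Fréchet means are eventually equal to `μ`. From then
on each contaminated variance coincides with the uncontaminated one and the statistic is exactly
`0`; almost sure convergence gives convergence in probability. -/

lemma eventually_minimizer_eq_of_tendsto {ι G : Type*} [Finite G] {l : Filter ι}
    {F : G → ℝ} {μ : G} (hμ : ∀ c, c ≠ μ → F μ < F c)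
    {S : ι → G → ℝ} (hS : ∀ c, Tendsto (fun N => S N c) l (𝓝 (F c)))
    {m : ι → G} (hm : ∀ N c, S N (m N) ≤ S N c) :
    ∀ᶠ N in l, m N = μ := by
  have hsep : ∀ᶠ N in l, ∀ c, c ≠ μ → S N μ < S N c :=
    eventually_all.2 fun c => eventually_imp_distrib_left.2 fun hc =>
      (hS μ).eventually_lt (hS c) (hμ c hc)
  filter_upwards [hsep] with N hN
  by_contra hne
  exact (hN _ hne).not_ge (hm N μ)

lemma average_Ico_eq (Y : ℕ → ℝ) {a b : ℕ} (hab : a < b) :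
    ((b - a : ℕ) : ℝ)⁻¹ * ∑ i ∈ Finset.Ico a b, Y i =
      ((∑ i ∈ Finset.range b, Y i) / b - a / b * ((∑ i ∈ Finset.range a, Y i) / a)) /
        (1 - a / b) := by
  have hb : (b : ℝ) ≠ 0 := Nat.cast_ne_zero.2 (Nat.ne_zero_of_lt hab)
  have hba : (b : ℝ) - a ≠ 0 := sub_ne_zero.2 (by exact_mod_cast hab.ne')
  rw [Finset.sum_Ico_eq_sub _ hab.le, Nat.cast_sub hab.le]
  rcases Nat.eq_zero_or_pos a with rfl | ha
  · simp [div_eq_inv_mul]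
  · have ha' : (a : ℝ) ≠ 0 := by positivity
    field_simp

lemma tendsto_average_Ico {ι : Type*} {l : Filter ι} {Y : ℕ → ℝ} {L θ : ℝ}
    (hY : Tendsto (fun k : ℕ => (∑ i ∈ Finset.range k, Y i) / k) atTop (𝓝 L))
    {a b : ι → ℕ} (ha : Tendsto a l atTop) (hb : Tendsto b l atTop)
    (hab : Tendsto (fun N => (a N : ℝ) / b N) l (𝓝 θ)) (hθ : θ < 1) :
    Tendsto (fun N => ((b N - a N : ℕ) : ℝ)⁻¹ * ∑ i ∈ Finset.Ico (a N) (b N), Y i) l (𝓝 L) := by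
  have hlim := ((hY.comp hb).sub (hab.mul (hY.comp ha))).div
    (tendsto_const_nhds.sub hab) (sub_ne_zero.2 hθ.ne')
  have hL : (L - θ * L) / (1 - θ) = L := by
    field_simp [sub_ne_zero.2 hθ.ne']
  rw [hL] at hlim
  refine hlim.congr' ?_
  filter_upwards [hab.eventually_lt_const hθ, hb.eventually_gt_atTop 0] with N hlt hpos
  have hpos' : (0 : ℝ) < b N := by exact_mod_cast hpos
  have hab' : a N < b N := by
    rw [div_lt_one hpos'] at hlt
    exact_mod_cast hlt
  exact (average_Ico_eq Y hab').symm

lemma splitPt_tendsto_atTop {t : ℝ} (ht : 0 < t) : Tendsto (splitPt t) atTop atTop :=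
  tendsto_nat_floor_atTop.comp (tendsto_natCast_atTop_atTop.atTop_mul_const ht)

lemma tendsto_splitPt_div {t : ℝ} (ht : 0 ≤ t) :
    Tendsto (fun N : ℕ => (splitPt t N : ℝ) / N) atTop (𝓝 t) := by
  simpa only [splitPt, mul_comm _ t, Function.comp_def] using
    (tendsto_nat_floor_mul_div_atTop ht).comp tendsto_natCast_atTop_atTop

section Blocks

variable {G Ω : Type*} [MetricSpace G] {X : ℕ → Ω → G} {ω : Ω} {c : G} {t L : ℝ}

lemma tendsto_empF_initial_block (ht : 0 < t)
    (h : Tendsto (fun k : ℕ => (∑ i ∈ Finset.range k, dist (X i ω) c ^ 2) / k) atTop (𝓝 L)) :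
    Tendsto (fun N => empF X 0 (splitPt t N) ω c) atTop (𝓝 L) := by
  refine (h.comp (splitPt_tendsto_atTop ht)).congr fun N => ?_
  simp only [Function.comp, empF, Finset.range_eq_Ico, Nat.sub_zero, div_eq_inv_mul]

lemma tendsto_empF_final_block (ht : t ∈ Set.Ioo (0 : ℝ) 1)
    (h : Tendsto (fun k : ℕ => (∑ i ∈ Finset.range k, dist (X i ω) c ^ 2) / k) atTop (𝓝 L)) :
    Tendsto (fun N => empF X (splitPt t N) N ω c) atTop (𝓝 L) :=
  tendsto_average_Ico h (splitPt_tendsto_atTop ht.1) tendsto_id (tendsto_splitPt_div ht.1.le) ht.2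

end Blocks

lemma measurable_empF_comp {G Ω : Type*} [MetricSpace G] [MeasurableSpace G] [BorelSpace G]
    [SecondCountableTopology G] [MeasurableSpace Ω] {X : ℕ → Ω → G}
    (hX : ∀ i, Measurable (X i)) (a b : ℕ) {m : Ω → G} (hm : Measurable m) :
    Measurable fun ω => empF X a b ω (m ω) := by
  unfold empF
  fun_prop

lemma ae_tendsto_average_comp {G Ω : Type*} [MeasurableSpace G] [MeasurableSpace Ω]
    {Pr : Measure Ω} {P : Measure G} {X : ℕ → Ω → G} (hX : ∀ i, Measurable (X i))
    (hindep : Pairwise fun i j => IndepFun (X i) (X j) Pr)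
    (hdist : ∀ i, Measure.map (X i) Pr = P) {g : G → ℝ} (hg : Measurable g)
    (hgi : Integrable g P) :
    ∀ᵐ ω ∂Pr, Tendsto (fun k : ℕ => (∑ i ∈ Finset.range k, g (X i ω)) / k) atTop
      (𝓝 (∫ x, g x ∂P)) := by
  have hint : Integrable (fun ω => g (X 0 ω)) Pr :=
    (hdist 0 ▸ hgi).comp_measurable (hX 0)
  have hident : ∀ i, IdentDistrib (fun ω => g (X i ω)) (fun ω => g (X 0 ω)) Pr Pr := fun i =>
    IdentDistrib.comp ⟨(hX i).aemeasurable, (hX 0).aemeasurable, by rw [hdist i, hdist 0]⟩ hg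
  have hmean : ∫ ω, g (X 0 ω) ∂Pr = ∫ x, g x ∂P := by
    rw [← hdist 0, integral_map (hX 0).aemeasurable hg.aestronglyMeasurable]
  simpa only [hmean] using strong_law_ae_real (fun i ω => g (X i ω)) hint
    (fun i j hij => (hindep hij).comp hg hg) hident

theorem mean_difference_component_negligible_general
    {G : Type*} [MetricSpace G] [Fintype G]
    [MeasurableSpace G] [BorelSpace G]
    {Ω : Type*} [MeasurableSpace Ω] (Pr : Measure Ω) [IsProbabilityMeasure Pr]
    (P : Measure G) [IsProbabilityMeasure P]
    (X : ℕ → Ω → G) (hXmeas : ∀ i, Measurable (X i))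
    (hXindep : iIndepFun X Pr)
    (hXdist : ∀ i, Measure.map (X i) Pr = P)
    (μ : G) (hμmin : ∀ c : G, ∫ x, dist x μ ^ 2 ∂P ≤ ∫ x, dist x c ^ 2 ∂P)
    (hμuniq : ∀ c : G, (∀ c' : G, ∫ x, dist x c ^ 2 ∂P ≤ ∫ x, dist x c' ^ 2 ∂P) → c = μ)
    (σ2 : ℝ)
    (t : ℝ) (ht : t ∈ Set.Ioo (0 : ℝ) 1)
    (μA : ℕ → Ω → G) (hμAmeas : ∀ N, Measurable (μA N))
    (hμAmin : ∀ (N : ℕ) (ω : Ω) (c : G),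
      empF X 0 (splitPt t N) ω (μA N ω) ≤ empF X 0 (splitPt t N) ω c)
    (μB : ℕ → Ω → G) (hμBmeas : ∀ N, Measurable (μB N))
    (hμBmin : ∀ (N : ℕ) (ω : Ω) (c : G),
      empF X (splitPt t N) N ω (μB N ω) ≤ empF X (splitPt t N) N ω c) :
    TendstoInMeasure Pr
      (fun (N : ℕ) (ω : Ω) =>
        (N : ℝ) * (t * (1 - t) / σ2) *
          (empF X 0 (splitPt t N) ω (μB N ω) - empF X 0 (splitPt t N) ω (μA N ω) +
            empF X (splitPt t N) N ω (μA N ω) - empF X (splitPt t N) N ω (μB N ω)) ^ 2)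
      atTop (fun _ => (0 : ℝ)) := by
  have hgap : ∀ c, c ≠ μ → ∫ x, dist x μ ^ 2 ∂P < ∫ x, dist x c ^ 2 ∂P := fun c hc =>
    (hμmin c).lt_of_ne fun h => hc (hμuniq c fun c' => h ▸ hμmin c')
  have hslln : ∀ᵐ ω ∂Pr, ∀ c : G,
      Tendsto (fun k : ℕ => (∑ i ∈ Finset.range k, dist (X i ω) c ^ 2) / k) atTop
        (𝓝 (∫ x, dist x c ^ 2 ∂P)) :=
    ae_all_iff.2 fun c => ae_tendsto_average_comp hXmeas (fun i j hij => hXindep.indepFun hij)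
      hXdist (by fun_prop) .of_finite
  have hmeans : ∀ᵐ ω ∂Pr, ∀ᶠ N in atTop, μA N ω = μ ∧ μB N ω = μ := by
    filter_upwards [hslln] with ω hω
    exact (eventually_minimizer_eq_of_tendsto hgap
        (fun c => tendsto_empF_initial_block ht.1 (hω c)) (hμAmin · ω)).and
      (eventually_minimizer_eq_of_tendsto hgap
        (fun c => tendsto_empF_final_block ht (hω c)) (hμBmin · ω))
  refine tendstoInMeasure_of_tendsto_ae (fun N => Measurable.aestronglyMeasurable ?_) ?_
  · have hemp := measurable_empF_comp hXmeas
    fun_prop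
  · filter_upwards [hmeans] with ω hω
    refine tendsto_const_nhds.congr' ?_
    filter_upwards [hω] with N ⟨hA, hB⟩
    rw [hA, hB]
    ring

/-- **Negligibility of the mean-difference component of the test statistic
under the null hypothesis.**  For i.i.d. observations on a finite metric space
with unique Fréchet mean `μ` and `σ² = E[d⁴(X₁,μ)] − V² > 0`, fix `t ∈ (0,1)`
and set `n = ⌊Nt⌋`.  With `μ̂ₙ`, `μ̂_{N−n}` measurable empirical Fréchet means
of the two blocks, `V̂ₙ = (1/n)Σ_{i≤n} d²(Xᵢ,μ̂ₙ)`,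
`V̂_{N−n} = (1/(N−n))Σ_{i>n} d²(Xᵢ,μ̂_{N−n})`, and the contaminated versions
`V̂ₙᶜ`, `V̂_{N−n}ᶜ` obtained by swapping the means, the quantity
`N (t(1−t)/σ²) (V̂ₙᶜ − V̂ₙ + V̂_{N−n}ᶜ − V̂_{N−n})²` converges to `0` in
probability as `N → ∞`. -/
theorem mean_difference_component_negligible
    {G : Type*} [MetricSpace G] [Fintype G] [Nonempty G]
    [MeasurableSpace G] [BorelSpace G]
    {Ω : Type*} [MeasurableSpace Ω] (Pr : Measure Ω) [IsProbabilityMeasure Pr]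
    (P : Measure G) [IsProbabilityMeasure P]
    (X : ℕ → Ω → G) (hXmeas : ∀ i, Measurable (X i))
    (hXindep : iIndepFun X Pr)
    (hXdist : ∀ i, Measure.map (X i) Pr = P)
    (μ : G) (hμmin : ∀ c : G, ∫ x, dist x μ ^ 2 ∂P ≤ ∫ x, dist x c ^ 2 ∂P)
    (hμuniq : ∀ c : G, (∀ c' : G, ∫ x, dist x c ^ 2 ∂P ≤ ∫ x, dist x c' ^ 2 ∂P) → c = μ)
    (V σ2 : ℝ) (hV : V = ∫ x, dist x μ ^ 2 ∂P)
    (hσ2 : σ2 = (∫ x, dist x μ ^ 4 ∂P) - V ^ 2) (hσ2pos : 0 < σ2)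
    (t : ℝ) (ht : t ∈ Set.Ioo (0 : ℝ) 1)
    (μA : ℕ → Ω → G) (hμAmeas : ∀ N, Measurable (μA N))
    (hμAmin : ∀ (N : ℕ) (ω : Ω) (c : G),
      empF X 0 (splitPt t N) ω (μA N ω) ≤ empF X 0 (splitPt t N) ω c)
    (μB : ℕ → Ω → G) (hμBmeas : ∀ N, Measurable (μB N))
    (hμBmin : ∀ (N : ℕ) (ω : Ω) (c : G),
      empF X (splitPt t N) N ω (μB N ω) ≤ empF X (splitPt t N) N ω c) :
    TendstoInMeasure Pr
      (fun (N : ℕ) (ω : Ω) =>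
        (N : ℝ) * (t * (1 - t) / σ2) *
          (empF X 0 (splitPt t N) ω (μB N ω) - empF X 0 (splitPt t N) ω (μA N ω) +
            empF X (splitPt t N) N ω (μA N ω) - empF X (splitPt t N) N ω (μB N ω)) ^ 2)
      atTop (fun _ => (0 : ℝ)) :=
  mean_difference_component_negligible_general Pr P X hXmeas hXindep hXdist μ hμmin hμuniq σ2 t ht
    μA hμAmeas hμAmin μB hμBmeas hμBmin
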